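/- (Weight-zero case of the paper's Lemma identifying the bottom steps of the p-saturated filtration.) For every n ≥ 1: Fil^p_0 Wₙ(L) = Wₙ(O) and Fil^p_1 Wₙ(L) = Wₙ(O). -/

import Mathlib

noncomputable section

open scoped Classical

/-- A discretely valued field: a field `L` together with a normalized additive valuation
`v : L → ℤ ∪ {∞}` and a uniformizer `z` (so `v z = 1`).  The valuation ring is
`O = {a : L | 0 ≤ v a}`, with maximal ideal `𝔪 = {a : L | 1 ≤ v a}`. -/
structure DVField (L : Type) [Field L] : Type where
  v : L → WithTop ℤ
  z : L
  v_top : ∀ a : L, v a = ⊤ ↔ a = 0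
  v_mul : ∀ a b : L, v (a * b) = v a + v b
  v_add : ∀ a b : L, min (v a) (v b) ≤ v (a + b)
  v_z : v z = 1

namespace DVField

variable {L : Type} [Field L]

/-- `Wₙ(O) ⊆ Wₙ(L)`: the truncated Witt vectors all of whose components are integral. -/
def WO (D : DVField L) (p n : ℕ) : Set (TruncatedWittVector p n L) :=
  {x | ∀ i : Fin n, 0 ≤ D.v (x.coeff i)}

/-- The Brylinski–Kato filtration
`fil^log_r Wₙ(L) = {(a₀, …, a_{n-1}) | p^{n-1-i} · v(aᵢ) ≥ -r for all i}`. -/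
def filLog (D : DVField L) (p r n : ℕ) : Set (TruncatedWittVector p n L) :=
  {x | ∀ i : Fin n, (↑(-(r : ℤ)) : WithTop ℤ) ≤ p ^ (n - 1 - (i : ℕ)) • D.v (x.coeff i)}

end DVField

/-- The Verschiebung `V : Wₙ(L) → W_{n+1}(L)`, shifting components. -/
def wV {p : ℕ} {L : Type} [Field L] {n : ℕ} (x : TruncatedWittVector p n L) :
    TruncatedWittVector p (n + 1) L :=
  TruncatedWittVector.mk p fun i =>
    if h : (i : ℕ) = 0 then 0 else x.coeff ⟨(i : ℕ) - 1, by have := i.isLt; omega⟩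

/-- The iterated Verschiebung `V^{n-m} : W_m(L) → Wₙ(L)` (for `m ≤ n`), given by shifting
components by `n - m`. -/
def wVit {p : ℕ} {L : Type} [Field L] {m n : ℕ} (x : TruncatedWittVector p m L) :
    TruncatedWittVector p n L :=
  TruncatedWittVector.mk p fun i =>
    if h : n - m ≤ (i : ℕ) ∧ (i : ℕ) - (n - m) < m then x.coeff ⟨(i : ℕ) - (n - m), h.2⟩ else 0

/-- The restriction `R : W_{n+1}(L) → Wₙ(L)`, dropping the last component. -/
def wR {p : ℕ} {L : Type} [Field L] {n : ℕ} (x : TruncatedWittVector p (n + 1) L) :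
    TruncatedWittVector p n L :=
  TruncatedWittVector.mk p fun i => x.coeff i.castSucc

/-- The iterated restriction `R^{m-n} : W_m(L) → Wₙ(L)` (for `n ≤ m`), keeping the first `n`
components. -/
def wRes {p : ℕ} {L : Type} [Field L] {m n : ℕ} (x : TruncatedWittVector p m L) :
    TruncatedWittVector p n L :=
  TruncatedWittVector.mk p fun i => if h : (i : ℕ) < m then x.coeff ⟨(i : ℕ), h⟩ else 0

/-- The Frobenius `F : W_{n+1}(L) → Wₙ(L)` in characteristic `p`:
componentwise `p`-th power followed by restriction. -/
def wF {p : ℕ} {L : Type} [Field L] {n : ℕ} (x : TruncatedWittVector p (n + 1) L) :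
    TruncatedWittVector p n L :=
  TruncatedWittVector.mk p fun i => x.coeff i.castSucc ^ p

/-- The Teichmüller lift `[a] = (a, 0, …, 0)`. -/
def wT (p : ℕ) {L : Type} [Field L] (n : ℕ) (a : L) : TruncatedWittVector p n L :=
  TruncatedWittVector.mk p fun i => if (i : ℕ) = 0 then a else 0

/-- The map `p̲ : Wₙ(L) → W_{n+1}(L)`: lift to length `n+1` (by appending a zero component)
and multiply by `p`. -/
def wP {p : ℕ} [Fact p.Prime] {L : Type} [Field L] {n : ℕ} (x : TruncatedWittVector p n L) :
    TruncatedWittVector p (n + 1) L :=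
  p • (wRes x : TruncatedWittVector p (n + 1) L)

namespace DVField

variable {L : Type} [Field L]

/-- The Kato–Matsuda filtration
`fil_r Wₙ(L) = fil^log_{r-1} Wₙ(L) + V^{n-m}(fil^log_r W_m(L))` where `m = min(v_p(r), n)`,
and `fil_0 Wₙ(L) = Wₙ(O)`. -/
def filKM (D : DVField L) (p : ℕ) [Fact p.Prime] (r n : ℕ) :
    Set (TruncatedWittVector p n L) :=
  if r = 0 then D.WO p n
  else {x | ∃ a ∈ D.filLog p (r - 1) n,
    ∃ b ∈ D.filLog p r (min (padicValNat p r) n), x = a + wVit b}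

/-- The `p`-saturation `Fil^p_r Wₙ(L) = Σ_{s=0}^{n-1} p^s · fil_{r·p^s} Wₙ(L)`. -/
def FilP (D : DVField L) (p : ℕ) [Fact p.Prime] (r n : ℕ) :
    Set (TruncatedWittVector p n L) :=
  {x | ∃ f : Fin n → TruncatedWittVector p n L,
      (∀ s : Fin n, f s ∈ D.filKM p (r * p ^ (s : ℕ)) n) ∧
      x = ∑ s : Fin n, p ^ (s : ℕ) • f s}

end DVField

/-!
Multiplication by `p` on Witt vectors in characteristic `p` is `V ∘ F`, so `p^s • x` has
components `x_{i-s}^{p^s}` in degrees `i ≥ s` and `0` below. Hence `p^s` kills the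
Verschiebung part of `fil_{p^s} Wₙ(L)`, which lives in the last `v_p(p^s) = s` degrees, and maps
`fil^log_{p^s-1} Wₙ(L)` into `Wₙ(O)`: the bound `p^{n-1-i} v(aᵢ) ≥ 1 - p^s > -p^{n-1-i}` for the
surviving components `aᵢ` forces `v(aᵢ) ≥ 0`. Since `Wₙ(O)` is an additive subgroup, every
`Σ p^s fₛ` in `Fil^p_1` (and trivially in `Fil^p_0`) is integral; conversely
`Wₙ(O) = fil_0 ⊆ fil_1` is the summand `s = 0`.
-/

theorem WithTop.nonneg_of_neg_lt_nsmul {c : ℕ} {a : WithTop ℤ}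
    (h : ((-c : ℤ) : WithTop ℤ) < c • a) : 0 ≤ a := by
  induction a with
  | top => exact le_top
  | coe k =>
    rw [← WithTop.coe_nsmul, WithTop.coe_lt_coe, nsmul_eq_mul] at h
    have hk : -1 < k := by nlinarith
    exact_mod_cast (by omega : 0 ≤ k)

namespace DVField

variable {L : Type} [Field L] (D : DVField L)

theorem v_zero : D.v 0 = ⊤ := (D.v_top 0).mpr rfl

theorem v_one : D.v 1 = 0 := by
  have h : D.v 1 + D.v 1 = D.v 1 + 0 := by rw [← D.v_mul, mul_one, add_zero]
  exact WithTop.add_left_cancel (fun h1 => one_ne_zero ((D.v_top 1).mp h1)) h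

def addValuation : AddValuation L (WithTop ℤ) :=
  AddValuation.of D.v D.v_zero D.v_one D.v_add D.v_mul

@[simp]
theorem addValuation_apply (a : L) : D.addValuation a = D.v a := rfl

theorem v_pow (a : L) (m : ℕ) : D.v (a ^ m) = m • D.v a := D.addValuation.map_pow a m

def integers : Subring L where
  carrier := {a | 0 ≤ D.v a}
  zero_mem' := by simp [D.v_zero]
  one_mem' := by simp [D.v_one]
  add_mem' {a b} ha hb := (le_min ha hb).trans (D.v_add a b)
  mul_mem' {a b} ha hb := by simpa only [Set.mem_ofPred_eq, D.v_mul] using add_nonneg ha hb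
  neg_mem' {a} ha := by simpa only [Set.mem_ofPred_eq, ← D.addValuation_apply,
    AddValuation.map_neg] using ha

variable (p : ℕ)

theorem WO_subset_filLog (r n : ℕ) : D.WO p n ⊆ D.filLog p r n := fun x hx i =>
  le_trans (by exact_mod_cast neg_nonpos.mpr (Int.natCast_nonneg r)) (nsmul_nonneg (hx i) _)

variable [Fact p.Prime]

def wittIntegers (n : ℕ) : Subring (TruncatedWittVector p n L) :=
  ((WittVector.truncate n).comp (WittVector.map D.integers.subtype)).range

theorem coe_wittIntegers (n : ℕ) : (D.wittIntegers p n : Set _) = D.WO p n := by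
  ext x
  constructor
  · rintro ⟨y, rfl⟩ i
    rw [RingHom.comp_apply, WittVector.coeff_truncate, WittVector.map_coeff]
    exact (y.coeff i).2
  · intro hx
    refine ⟨WittVector.mk p fun i => if h : i < n then ⟨x.coeff ⟨i, h⟩, hx ⟨i, h⟩⟩ else 0, ?_⟩
    ext i
    simp [WittVector.coeff_truncate, WittVector.map_coeff, i.isLt]

theorem zero_mem_WO (n : ℕ) : (0 : TruncatedWittVector p n L) ∈ D.WO p n :=
  D.coe_wittIntegers p n ▸ zero_mem _

end DVField

namespace TruncatedWittVector

variable {p : ℕ} [Fact p.Prime] {R : Type*} [CommRing R] {n : ℕ}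

theorem pow_smul_eq_truncate_out_mul (s : ℕ) (x : TruncatedWittVector p n R) :
    p ^ s • x = WittVector.truncate n (x.out * (p : WittVector p R) ^ s) := by
  rw [mul_comm, ← Nat.cast_pow, ← nsmul_eq_mul, map_nsmul]
  exact congrArg _ (truncateFun_out x).symm

variable [CharP R p]

theorem coeff_pow_smul_of_lt {s : ℕ} (x : TruncatedWittVector p n R) {i : Fin n}
    (h : (i : ℕ) < s) : (p ^ s • x).coeff i = 0 := by
  rw [pow_smul_eq_truncate_out_mul, WittVector.coeff_truncate,
    WittVector.mul_pow_charP_coeff_zero _ h]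

theorem coeff_pow_smul_add (s : ℕ) (x : TruncatedWittVector p n R) (i : ℕ) (h : i + s < n) :
    (p ^ s • x).coeff ⟨i + s, h⟩ = x.coeff ⟨i, by omega⟩ ^ p ^ s := by
  rw [pow_smul_eq_truncate_out_mul, WittVector.coeff_truncate,
    WittVector.mul_pow_charP_coeff_succ, ← coeff_out]

end TruncatedWittVector

open TruncatedWittVector

section Verschiebung

variable {p : ℕ} [Fact p.Prime] {L : Type} [Field L]

theorem wVit_zero {m n : ℕ} : (wVit (0 : TruncatedWittVector p m L) : TruncatedWittVector p n L) = 0 := by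
  ext i
  simp [wVit]

variable [CharP L p]

theorem pow_smul_wVit_eq_zero {m n s : ℕ} (hm : m ≤ s) (b : TruncatedWittVector p m L) :
    p ^ s • (wVit b : TruncatedWittVector p n L) = 0 := by
  ext ⟨j, hj⟩
  rw [coeff_zero]
  rcases lt_or_ge j s with hjs | hsj
  · exact coeff_pow_smul_of_lt _ hjs
  · obtain ⟨i, rfl⟩ := Nat.exists_eq_add_of_le' hsj
    rw [coeff_pow_smul_add, wVit, coeff_mk, dif_neg (by dsimp only; omega),
      zero_pow (pow_ne_zero _ (Fact.out : p.Prime).ne_zero)]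

theorem DVField.pow_smul_mem_WO_of_mem_filLog (D : DVField L) {n s : ℕ}
    {a : TruncatedWittVector p n L} (ha : a ∈ D.filLog p (p ^ s - 1) n) :
    p ^ s • a ∈ D.WO p n := by
  rintro ⟨j, hj⟩
  rcases lt_or_ge j s with hjs | hsj
  · rw [coeff_pow_smul_of_lt _ hjs, D.v_zero]
    exact le_top
  · obtain ⟨i, rfl⟩ := Nat.exists_eq_add_of_le' hsj
    rw [coeff_pow_smul_add, D.v_pow]
    refine nsmul_nonneg (WithTop.nonneg_of_neg_lt_nsmul (lt_of_lt_of_le ?_ (ha ⟨i, by omega⟩))) _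
    have hps : p ^ s ≤ p ^ (n - 1 - i) := Nat.pow_le_pow_right (Fact.out : p.Prime).pos (by omega)
    have hps1 : 1 ≤ p ^ s := Nat.one_le_pow _ _ (Fact.out : p.Prime).pos
    exact_mod_cast (by omega : -((p ^ (n - 1 - i) : ℕ) : ℤ) < -((p ^ s - 1 : ℕ) : ℤ))

end Verschiebung

namespace DVField

variable {L : Type} [Field L] (D : DVField L) (p : ℕ) [Fact p.Prime]

theorem filKM_zero (n : ℕ) : D.filKM p 0 n = D.WO p n := if_pos rfl

theorem zero_mem_filKM (r n : ℕ) : (0 : TruncatedWittVector p n L) ∈ D.filKM p r n := by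
  unfold filKM
  split_ifs
  · exact D.zero_mem_WO p n
  · refine ⟨0, D.WO_subset_filLog p _ n (D.zero_mem_WO p n), 0,
      D.WO_subset_filLog p _ _ (D.zero_mem_WO p _), by rw [wVit_zero, add_zero]⟩

theorem WO_subset_filKM_one (n : ℕ) : D.WO p n ⊆ D.filKM p 1 n := fun x hx =>
  ⟨x, D.WO_subset_filLog p 0 n hx, 0, D.WO_subset_filLog p _ _ (D.zero_mem_WO p _), by
    rw [wVit_zero, add_zero]⟩

theorem filKM_subset_FilP {n : ℕ} (hn : 0 < n) (r : ℕ) : D.filKM p r n ⊆ D.FilP p r n := by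
  intro x hx
  refine ⟨Pi.single ⟨0, hn⟩ x, fun s => ?_, ?_⟩
  · rcases eq_or_ne s ⟨0, hn⟩ with rfl | hs
    · simpa using hx
    · simpa [hs] using D.zero_mem_filKM p _ n
  · rw [Finset.sum_eq_single_of_mem ⟨0, hn⟩ (Finset.mem_univ _)
      (fun s _ hs => by rw [Pi.single_eq_of_ne hs, smul_zero])]
    simp

theorem FilP_subset_WO {r n : ℕ}
    (h : ∀ s : ℕ, ∀ x ∈ D.filKM p (r * p ^ s) n, p ^ s • x ∈ D.WO p n) :
    D.FilP p r n ⊆ D.WO p n := by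
  rintro _ ⟨f, hf, rfl⟩
  rw [← coe_wittIntegers] at h ⊢
  exact sum_mem fun s _ => h s (f s) (hf s)

theorem nsmul_mem_WO {n : ℕ} (m : ℕ) {x : TruncatedWittVector p n L}
    (hx : x ∈ D.WO p n) : m • x ∈ D.WO p n := by
  rw [← coe_wittIntegers] at hx ⊢
  exact nsmul_mem hx m

theorem pow_smul_mem_WO_of_mem_filKM_pow [CharP L p] {n s : ℕ} {x : TruncatedWittVector p n L}
    (hx : x ∈ D.filKM p (p ^ s) n) : p ^ s • x ∈ D.WO p n := by
  rw [filKM, if_neg (pow_ne_zero _ (Fact.out : p.Prime).ne_zero)] at hx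
  obtain ⟨a, ha, b, -, rfl⟩ := hx
  have hm : min (padicValNat p (p ^ s)) n ≤ s := by
    rw [padicValNat.prime_pow]
    exact min_le_left _ _
  rw [smul_add, pow_smul_wVit_eq_zero hm, add_zero]
  exact D.pow_smul_mem_WO_of_mem_filLog ha

end DVField

/-- (Weight-zero bottom steps of the `p`-saturated filtration.)
For every `n ≥ 1`: `Fil^p_0 Wₙ(L) = Wₙ(O)` and `Fil^p_1 Wₙ(L) = Wₙ(O)`. -/
theorem statement4 (p : ℕ) [Fact p.Prime] (L : Type) [Field L] [CharP L p]
    (D : DVField L) (n : ℕ) (hn : 1 ≤ n) :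
    D.FilP p 0 n = D.WO p n ∧ D.FilP p 1 n = D.WO p n := by
  refine ⟨?_, ?_⟩
  · refine (D.FilP_subset_WO p fun s x hx => ?_).antisymm ?_
    · exact D.nsmul_mem_WO p _ (by rwa [zero_mul, D.filKM_zero] at hx)
    · exact D.filKM_zero p n ▸ D.filKM_subset_FilP p hn 0
  · refine (D.FilP_subset_WO p fun s x hx => ?_).antisymm ?_
    · exact D.pow_smul_mem_WO_of_mem_filKM_pow p (by rwa [one_mul] at hx)
    · exact (D.WO_subset_filKM_one p n).trans (D.filKM_subset_FilP p hn 1)
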